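/- arXiv:math/0605336 — 5 statements merged into one kernel-verified Lean document; each statement's English description precedes it below -/
import Mathlib

section
/- For every integer d ≥ 3, all 2×2 minors of the matrix M_d are nonnegative; that is, for all integers a, b, r, s with 0 ≤ a < b ≤ δ and 0 ≤ r < s ≤ d−1, one has m_{a,r}·m_{b,s} − m_{a,s}·m_{b,r} ≥ 0. -/
open Finset

/-- TP₂ property of the Pascal matrix, consecutive columns. -/
lemma choose_tp_cons (x y k : ℕ) (h : y ≤ x) :
    x.choose k * y.choose (k + 1) ≤ x.choose (k + 1) * y.choose k := by
  have h1 := Nat.choose_succ_right_eq x k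
  have h2 := Nat.choose_succ_right_eq y k
  have hsub : y - k ≤ x - k := Nat.sub_le_sub_right h k
  apply Nat.le_of_mul_le_mul_right _ (Nat.succ_pos k)
  calc x.choose k * y.choose (k + 1) * (k + 1)
      = x.choose k * (y.choose (k + 1) * (k + 1)) := by ring
    _ = x.choose k * (y.choose k * (y - k)) := by rw [h2]
    _ ≤ x.choose k * (y.choose k * (x - k)) :=
        Nat.mul_le_mul_left _ (Nat.mul_le_mul_left _ hsub)
    _ = x.choose k * (x - k) * y.choose k := by ring
    _ = x.choose (k + 1) * (k + 1) * y.choose k := by rw [h1]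
    _ = x.choose (k + 1) * y.choose k * (k + 1) := by ring

/-- TP₂ property of the Pascal matrix. -/
lemma choose_tp (x y l k : ℕ) (hxy : y ≤ x) (hlk : l ≤ k) :
    x.choose l * y.choose k ≤ x.choose k * y.choose l := by
  obtain ⟨m, rfl⟩ := Nat.exists_eq_add_of_le hlk
  clear hlk
  induction m with
  | zero => simp [Nat.mul_comm]
  | succ m ih =>
    rcases Nat.eq_zero_or_pos (x.choose (l + m)) with h0 | hpos
    · have hx : x < l + m := Nat.choose_eq_zero_iff.mp h0
      have hy : y.choose (l + (m + 1)) = 0 := by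
        apply Nat.choose_eq_zero_of_lt; omega
      simp [hy]
    · apply Nat.le_of_mul_le_mul_left _ hpos
      have hc := choose_tp_cons x y (l + m) hxy
      calc x.choose (l + m) * (x.choose l * y.choose (l + (m + 1)))
          = x.choose l * (x.choose (l + m) * y.choose ((l + m) + 1)) := by
            ring_nf
        _ ≤ x.choose l * (x.choose ((l + m) + 1) * y.choose (l + m)) :=
            Nat.mul_le_mul_left _ hc
        _ = x.choose ((l + m) + 1) * (x.choose l * y.choose (l + m)) := by ring
        _ ≤ x.choose ((l + m) + 1) * (x.choose (l + m) * y.choose l) :=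
            Nat.mul_le_mul_left _ ih
        _ = x.choose (l + m) * (x.choose (l + (m + 1)) * y.choose l) := by
            ring_nf

/-- Integer cast version of `choose_tp`. -/
lemma choose_tp' (x y l k : ℕ) (hxy : y ≤ x) (hlk : l ≤ k) :
    (0 : ℤ) ≤ (x.choose k : ℤ) * y.choose l - (x.choose l : ℤ) * y.choose k := by
  have := choose_tp x y l k hxy hlk
  have : ((x.choose l * y.choose k : ℕ) : ℤ) ≤ ((x.choose k * y.choose l : ℕ) : ℤ) :=
    Int.ofNat_le.mpr this
  push_cast at this
  linarith

/-- Diagonal monotonicity of 2×2 Pascal minors. -/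
lemma diag_step (x y k l : ℕ) (hxy : y ≤ x) (hkl : l < k) :
    (x.choose k : ℤ) * y.choose l - (x.choose l : ℤ) * y.choose k ≤
    ((x + 1).choose k : ℤ) * (y + 1).choose l -
      ((x + 1).choose l : ℤ) * (y + 1).choose k := by
  obtain ⟨k, rfl⟩ : ∃ k', k = k' + 1 := ⟨k - 1, by omega⟩
  cases l with
  | zero =>
    have hx := Nat.choose_succ_succ' x k
    have hy := Nat.choose_succ_succ' y k
    have hm : y.choose k ≤ x.choose k := Nat.choose_le_choose k hxy
    simp only [Nat.choose_zero_right]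
    push_cast [hx, hy]
    have : (y.choose k : ℤ) ≤ (x.choose k : ℤ) := Int.ofNat_le.mpr hm
    linarith
  | succ l =>
    have hlk : l < k := by omega
    have hx1 := Nat.choose_succ_succ' x k
    have hy1 := Nat.choose_succ_succ' y k
    have hx2 := Nat.choose_succ_succ' x l
    have hy2 := Nat.choose_succ_succ' y l
    have t1 := choose_tp' x y l k hxy (le_of_lt hlk)
    have t2 := choose_tp' x y (l + 1) k hxy (by omega)
    have t3 := choose_tp' x y l (k + 1) hxy (by omega)
    push_cast [hx1, hy1, hx2, hy2]
    nlinarith [t1, t2, t3]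

/-- Iterated diagonal monotonicity. -/
lemma diag_shift (x y k l c : ℕ) (hxy : y ≤ x) (hkl : l ≤ k) :
    (x.choose k : ℤ) * y.choose l - (x.choose l : ℤ) * y.choose k ≤
    ((x + c).choose k : ℤ) * (y + c).choose l -
      ((x + c).choose l : ℤ) * (y + c).choose k := by
  rcases Nat.eq_or_lt_of_le hkl with rfl | hkl'
  · ring_nf; simp [mul_comm]
  induction c with
  | zero => simp
  | succ c ih =>
    refine le_trans ih ?_
    have := diag_step (x + c) (y + c) k l (by omega) hkl'
    have e1 : x + (c + 1) = (x + c) + 1 := by ring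
    have e2 : y + (c + 1) = (y + c) + 1 := by ring
    rw [e1, e2]
    exact this

/-- The master inequality for `g(t,j) = C(t,j) + C(d-t,j)` (centered case). -/
lemma master (d p q k l : ℕ) (hpq : p ≤ q) (hq : q + q ≤ d) (hkl : l ≤ k) :
    (0 : ℤ) ≤ ((p.choose k : ℤ) + ((d - p).choose k : ℤ)) *
        ((q.choose l : ℤ) + ((d - q).choose l : ℤ)) -
      ((p.choose l : ℤ) + ((d - p).choose l : ℤ)) *
        ((q.choose k : ℤ) + ((d - q).choose k : ℤ)) := by
  obtain ⟨c, rfl⟩ : ∃ c, q = p + c := ⟨q - p, by omega⟩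
  obtain ⟨e, he⟩ : ∃ e, d = p + (p + c) + e := ⟨d - p - (p + c), by omega⟩
  have h1 : d - p = (p + c) + e := by omega
  have h2 : d - (p + c) = p + e := by omega
  rw [h1, h2]
  -- F1 : D(q, p) ≤ D(q + e, p + e)  with q = p + c
  have F1 := diag_shift (p + c) p k l e (by omega) hkl
  -- F2 : D(p + e, p) ≤ D(p + e + c, p + c)
  have F2 := diag_shift (p + e) p k l c (by omega) hkl
  have e3 : p + e + c = p + c + e := by ring
  rw [e3] at F2
  nlinarith [F1, F2]

/-- The master inequality, symmetric form. -/
lemma master' (d p q k l : ℕ) (hp : p ≤ d) (hq : q ≤ d)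
    (hpq : min p (d - p) ≤ min q (d - q)) (hkl : l ≤ k) :
    (0 : ℤ) ≤ ((p.choose k : ℤ) + ((d - p).choose k : ℤ)) *
        ((q.choose l : ℤ) + ((d - q).choose l : ℤ)) -
      ((p.choose l : ℤ) + ((d - p).choose l : ℤ)) *
        ((q.choose k : ℤ) + ((d - q).choose k : ℤ)) := by
  rcases le_total p (d - p) with hp1 | hp1 <;> rcases le_total q (d - q) with hq1 | hq1
  · exact master d p q k l (by omega) (by omega) hkl
  · have := master d p (d - q) k l (by omega) (by omega) hkl
    rw [Nat.sub_sub_self hq] at this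
    nlinarith [this]
  · have := master d (d - p) q k l (by omega) (by omega) hkl
    rw [Nat.sub_sub_self hp] at this
    nlinarith [this]
  · have := master d (d - p) (d - q) k l (by omega) (by omega) hkl
    rw [Nat.sub_sub_self hp, Nat.sub_sub_self hq] at this
    nlinarith [this]

/-- Hockey stick identity over an interval, integer form. -/
lemma hockey (c : ℕ) : ∀ {m n : ℕ}, m ≤ n →
    ∑ t ∈ Finset.Ico m n, (t.choose c : ℤ) =
      (n.choose (c + 1) : ℤ) - (m.choose (c + 1) : ℤ) := by
  intro m n h
  induction n, h using Nat.le_induction with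
  | base => simp
  | succ n hmn ih =>
    rw [Finset.sum_Ico_succ_top hmn, ih, Nat.choose_succ_succ' n c]
    push_cast
    ring

/-- Twice a matrix entry as a symmetrized sum. -/
lemma two_f (d i c : ℕ) (h : i + i ≤ d) :
    2 * (((d + 1 - i).choose (c + 1) : ℤ) - (i.choose (c + 1) : ℤ)) =
      ∑ t ∈ Finset.Ico i (d + 1 - i), ((t.choose c : ℤ) + ((d - t).choose c : ℤ)) := by
  rw [Finset.sum_add_distrib]
  have h1 : i ≤ d + 1 - i := by omega
  have hh := hockey c h1
  have h2 : ∑ t ∈ Finset.Ico i (d + 1 - i), ((d - t).choose c : ℤ) =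
      ∑ t ∈ Finset.Ico i (d + 1 - i), (t.choose c : ℤ) := by
    apply Finset.sum_nbij' (fun t => d - t) (fun t => d - t) <;>
      simp only [Finset.mem_Ico] <;> intro t ht <;>
      first
        | omega
        | (rw [Nat.sub_sub_self (by omega : t ≤ d)])
        | trivial
  rw [hh, h2, hh]
  ring

/-- Antisymmetric double sums vanish. -/
lemma antisym_zero (s : Finset ℕ) (F : ℕ → ℕ → ℤ) (h : ∀ t u, F t u = -F u t) :
    ∑ t ∈ s, ∑ u ∈ s, F t u = 0 := by
  have key : ∑ t ∈ s, ∑ u ∈ s, (F t u + F u t) = 0 := by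
    apply Finset.sum_eq_zero; intro t _
    apply Finset.sum_eq_zero; intro u _
    linarith [h t u]
  have h2 : ∑ t ∈ s, ∑ u ∈ s, (F t u + F u t) =
      (∑ t ∈ s, ∑ u ∈ s, F t u) + (∑ t ∈ s, ∑ u ∈ s, F u t) := by
    rw [← Finset.sum_add_distrib]
    congr 1; funext t
    rw [← Finset.sum_add_distrib]
  have h3 : ∑ t ∈ s, ∑ u ∈ s, F u t = ∑ t ∈ s, ∑ u ∈ s, F t u := Finset.sum_comm
  linarith [key, h2.symm, h3]

/-- The entry `m_{i,j} = C(d+1-i, d-j) - C(i, d-j)` of the matrix `M_d`. -/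
def mMat (d i j : ℕ) : ℤ :=
  ((d + 1 - i).choose (d - j) : ℤ) - (i.choose (d - j) : ℤ)

/-- All 2×2 minors of the matrix `M_d` are nonnegative. -/
theorem minors_nonneg (d : ℕ) (hd : 3 ≤ d) (a b r s : ℕ)
    (hab : a < b) (hb : b ≤ d / 2) (hrs : r < s) (hs : s ≤ d - 1) :
    0 ≤ mMat d a r * mMat d b s - mMat d a s * mMat d b r := by
  have hbd : b + b ≤ d := by omega
  have had : a + a ≤ d := by omega
  -- column indices
  obtain ⟨c1, hc1⟩ : ∃ c1, d - r = c1 + 1 := ⟨d - r - 1, by omega⟩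
  obtain ⟨c2, hc2⟩ : ∃ c2, d - s = c2 + 1 := ⟨d - s - 1, by omega⟩
  have hcc : c2 < c1 := by omega
  set A := Finset.Ico a (d + 1 - a) with hA
  set B := Finset.Ico b (d + 1 - b) with hB
  have hBA : B ⊆ A := Finset.Ico_subset_Ico (by omega) (by omega)
  set g : ℕ → ℕ → ℤ := fun t c => (t.choose c : ℤ) + ((d - t).choose c : ℤ) with hg
  have e_ar : 2 * mMat d a r = ∑ t ∈ A, g t c1 := by
    rw [mMat, hc1]; exact two_f d a c1 had
  have e_as : 2 * mMat d a s = ∑ t ∈ A, g t c2 := by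
    rw [mMat, hc2]; exact two_f d a c2 had
  have e_br : 2 * mMat d b r = ∑ t ∈ B, g t c1 := by
    rw [mMat, hc1]; exact two_f d b c1 hbd
  have e_bs : 2 * mMat d b s = ∑ t ∈ B, g t c2 := by
    rw [mMat, hc2]; exact two_f d b c2 hbd
  set G : ℕ → ℕ → ℤ := fun t u => g t c1 * g u c2 - g t c2 * g u c1 with hG
  have key : (2 * mMat d a r) * (2 * mMat d b s) - (2 * mMat d a s) * (2 * mMat d b r) =
      ∑ t ∈ A, ∑ u ∈ B, G t u := by
    rw [e_ar, e_as, e_br, e_bs, Finset.sum_mul_sum, Finset.sum_mul_sum,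
      ← Finset.sum_sub_distrib]
    congr 1; funext t
    rw [← Finset.sum_sub_distrib]
  have split : ∑ t ∈ A, ∑ u ∈ B, G t u =
      (∑ t ∈ A \ B, ∑ u ∈ B, G t u) + (∑ t ∈ B, ∑ u ∈ B, G t u) :=
    (Finset.sum_sdiff hBA).symm
  have hzero : ∑ t ∈ B, ∑ u ∈ B, G t u = 0 := by
    apply antisym_zero
    intro t u
    simp only [hG]
    ring
  have hpos : 0 ≤ ∑ t ∈ A \ B, ∑ u ∈ B, G t u := by
    apply Finset.sum_nonneg
    intro t ht
    apply Finset.sum_nonneg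
    intro u hu
    rw [Finset.mem_sdiff, hA, hB, Finset.mem_Ico, Finset.mem_Ico] at ht
    rw [hB, Finset.mem_Ico] at hu
    exact master' d t u c1 c2 (by omega) (by omega) (by omega) (by omega)
  have : 0 ≤ ∑ t ∈ A, ∑ u ∈ B, G t u := by rw [split, hzero]; linarith
  nlinarith [this, key]
end

section
/- Let d ≥ 3 be an integer, δ = ⌊d/2⌋, and let a, r, s be integers with 0 ≤ a < δ (so that a+1 ≤ δ) and 0 ≤ r < s ≤ d−1. Set ã = d+1−a, r̄ = d−r, s̄ = d−s. Then #L(a, a+1; s̄, r̄) + #L(a+1, ã; s̄, r̄) ≤ #L(a, ã−1; s̄, r̄) + #L(ã−1, ã; s̄, r̄), where L(p, q; t, u) denotes the set of pairs of vertex-disjoint NE-lattice paths (P, Q) with P from (0, −p) to (t, −t) and Q from (0, −q) to (u, −u). -/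
/-- An NE-lattice path in `ℤ²`: a nonempty finite sequence of lattice points in which
each point is obtained from the previous one by a step `N = (0,1)` or a step `E = (1,0)`. -/
def IsNEPath (P : List (ℤ × ℤ)) : Prop :=
  P ≠ [] ∧ P.Chain' (fun x y => y = (x.1, x.2 + 1) ∨ y = (x.1 + 1, x.2))

/-- `P` is an NE-lattice path leading from `A` to `B`. -/
def IsNEPathFromTo (P : List (ℤ × ℤ)) (A B : ℤ × ℤ) : Prop :=
  IsNEPath P ∧ P.head? = some A ∧ P.getLast? = some B

/-- `latticePathPairs p q t u` is the set `L(p, q; t, u)` of pairs `(P, Q)` of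
vertex-disjoint NE-lattice paths with `P` from `(0, -p)` to `(t, -t)` and
`Q` from `(0, -q)` to `(u, -u)`. -/
def latticePathPairs (p q t u : ℤ) : Set (List (ℤ × ℤ) × List (ℤ × ℤ)) :=
  {PQ | IsNEPathFromTo PQ.1 (0, -p) (t, -t) ∧ IsNEPathFromTo PQ.2 (0, -q) (u, -u) ∧
    ∀ x ∈ PQ.1, x ∉ PQ.2}

/-!
By the Lindström–Gessel–Viennot argument for two paths (swap the tails at the first vertex of the
first path that lies on the second), `#L(p, q; t, u) = C(p, t) C(q, u) - C(p, u) C(q, t)` whenever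
`p < q` and `t < u`. With `b = d - a`, Pascal's rule and the hockey-stick identity turn the
difference of the two sides into `∑_{a < m < b} (M(m, b) - M(a, a + b - m))`, where
`M(x, y) = C(x, k) C(y, l) - C(x, l) C(y, k)` for `k = s̄ - 1`, `l = r̄ - 1`. Every term is
nonnegative because `M(x, y) ≤ M(x + 1, y + 1)` for `x ≤ y`: by Pascal's rule the increment is a
sum of three minors of the same shape, and these are nonnegative because, by the first step, they
count pairs of disjoint paths.
-/

section NEPath

variable {P : List (ℤ × ℤ)} {A B x y : ℤ × ℤ}

theorem isNEPath_iff : IsNEPath P ↔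
    P ≠ [] ∧ P.IsChain (fun x y => y = (x.1, x.2 + 1) ∨ y = (x.1 + 1, x.2)) :=
  Iff.rfl

theorem isNEPathFromTo_singleton : IsNEPathFromTo [x] A B ↔ x = A ∧ x = B := by
  simp [IsNEPathFromTo, isNEPath_iff, eq_comm]

theorem isNEPathFromTo_cons_cons {l : List (ℤ × ℤ)} :
    IsNEPathFromTo (x :: y :: l) A B ↔
      x = A ∧ (y = (x.1, x.2 + 1) ∨ y = (x.1 + 1, x.2)) ∧ IsNEPathFromTo (y :: l) y B := by
  simp only [IsNEPathFromTo, isNEPath_iff, List.isChain_cons_cons, List.getLast?_cons_cons,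
    List.head?_cons, Option.some.injEq, ne_eq, reduceCtorEq, not_false_eq_true, true_and]
  tauto

theorem IsNEPathFromTo.length_eq (h : IsNEPathFromTo P A B) :
    (P.length : ℤ) = B.1 + B.2 - (A.1 + A.2) + 1 := by
  induction P generalizing A with
  | nil => exact absurd rfl h.1.1
  | cons x l ih =>
    cases l with
    | nil =>
      obtain ⟨rfl, rfl⟩ := isNEPathFromTo_singleton.1 h
      simp
    | cons y l =>
      obtain ⟨rfl, hxy, h⟩ := isNEPathFromTo_cons_cons.1 h
      have := ih h
      rcases hxy with rfl | rfl <;> simp only [List.length_cons] at * <;> push_cast at * <;>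
        linarith

theorem IsNEPath.pairwise_lt (h : IsNEPath P) : P.Pairwise (· < ·) :=
  ((isNEPath_iff.1 h).2.imp fun x y hxy => by
    rcases hxy with rfl | rfl <;> simp [Prod.lt_iff]).pairwise

theorem IsNEPath.nodup (h : IsNEPath P) : P.Nodup :=
  h.pairwise_lt.nodup

theorem IsNEPathFromTo.eq_cons (h : IsNEPathFromTo P A B) : P = A :: P.tail := by
  obtain ⟨⟨hne, -⟩, hA, -⟩ := h
  cases P with
  | nil => exact absurd rfl hne
  | cons z l => simp_all

theorem IsNEPathFromTo.le (h : IsNEPathFromTo P A B) : A ≤ B := by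
  have hB : B ∈ P := List.mem_of_getLast? h.2.2
  have hlt := h.1.pairwise_lt
  rw [h.eq_cons] at hB hlt
  rcases List.mem_cons.1 hB with rfl | hB
  · exact le_rfl
  · exact (List.rel_of_pairwise_cons hlt hB).le

end NEPath

def nePaths (A B : ℤ × ℤ) : Set (List (ℤ × ℤ)) := {P | IsNEPathFromTo P A B}

section Counting

variable {A B : ℤ × ℤ}

theorem nePaths_self : nePaths A A = {[A]} := by
  ext P
  refine ⟨fun h => ?_, fun h => ?_⟩
  · have hlen := h.length_eq
    obtain ⟨x, rfl⟩ := List.length_eq_one_iff.1 (by omega : P.length = 1)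
    rw [(isNEPathFromTo_singleton.1 h).1]
    rfl
  · rw [Set.mem_singleton_iff.1 h]
    exact isNEPathFromTo_singleton.2 ⟨rfl, rfl⟩

theorem nePaths_eq_union (h : A ≠ B) :
    nePaths A B =
      List.cons A '' nePaths (A.1, A.2 + 1) B ∪ List.cons A '' nePaths (A.1 + 1, A.2) B := by
  ext P
  constructor
  · intro hP
    obtain ⟨l, rfl⟩ : ∃ l, P = A :: l := ⟨_, hP.eq_cons⟩
    cases l with
    | nil => exact absurd (isNEPathFromTo_singleton.1 hP).2 h
    | cons y l =>
      obtain ⟨-, hy | hy, hP⟩ := isNEPathFromTo_cons_cons.1 hP <;> subst hy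
      exacts [Or.inl ⟨_, hP, rfl⟩, Or.inr ⟨_, hP, rfl⟩]
  · rintro (⟨Q, hQ, rfl⟩ | ⟨Q, hQ, rfl⟩) <;>
      obtain ⟨l, rfl⟩ : ∃ l, Q = _ :: l := ⟨_, hQ.eq_cons⟩ <;>
      exact isNEPathFromTo_cons_cons.2 ⟨rfl, by simp, hQ⟩

theorem nePaths_eq_empty (h : ¬A ≤ B) : nePaths A B = ∅ :=
  Set.eq_empty_of_forall_notMem fun _ hP => h hP.le

theorem encard_nePaths (n k : ℕ) (A : ℤ × ℤ) :
    (nePaths A (A.1 + k, A.2 + n - k)).encard = n.choose k := by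
  induction n generalizing A k with
  | zero =>
    rcases k with _ | k
    · simp [nePaths_self]
    · rw [nePaths_eq_empty (by simp [Prod.le_def])]
      simp
  | succ n ih =>
    have hne : A ≠ (A.1 + k, A.2 + (n + 1 : ℕ) - k) := fun h => by
      have := congrArg (fun z => z.1 + z.2) h
      push_cast at this
      omega
    rw [nePaths_eq_union hne, Set.encard_union_eq, List.cons_injective.encard_image,
      List.cons_injective.encard_image]
    · have hN :
          (nePaths (A.1, A.2 + 1) (A.1 + k, A.2 + (n + 1 : ℕ) - k)).encard = n.choose k := by
        convert ih k (A.1, A.2 + 1) using 4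
        push_cast
        ring
      rcases k with _ | k
      · rw [hN, nePaths_eq_empty (A := (A.1 + 1, A.2)) (by simp [Prod.le_def])]
        simp
      · have hE : (nePaths (A.1 + 1, A.2)
            (A.1 + (k + 1 : ℕ), A.2 + (n + 1 : ℕ) - (k + 1 : ℕ))).encard = n.choose k := by
          convert ih k (A.1 + 1, A.2) using 4 <;> push_cast <;> ring
        rw [hN, hE, Nat.choose_succ_succ', add_comm]
        push_cast
        rfl
    · rw [Set.disjoint_image_iff List.cons_injective, Set.disjoint_left]
      intro Q h₁ h₂
      simpa using h₁.2.1.symm.trans h₂.2.1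

theorem encard_nePaths_antidiagonal (p t : ℕ) :
    (nePaths (0, -p) (t, -t)).encard = p.choose t := by
  convert encard_nePaths p t (0, -p) using 3
  simp

end Counting

theorem List.exists_eq_append_cons_of_exists {α : Type*} {p : α → Prop} {l : List α}
    (h : ∃ z ∈ l, p z) :
    ∃ l₁ x l₂, l = l₁ ++ x :: l₂ ∧ p x ∧ ∀ y ∈ l₁, ¬p y := by
  induction l with
  | nil => simp at h
  | cons a l ih =>
    by_cases ha : p a
    · exact ⟨[], a, l, rfl, ha, by simp⟩
    · obtain ⟨l₁, x, l₂, rfl, hx, hl₁⟩ := ih (by simpa [ha] using h)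
      exact ⟨a :: l₁, x, l₂, rfl, hx, by simpa [ha] using hl₁⟩

section TailSwap

variable {α : Type*} [DecidableEq α]

/-- Exchange the tails of `P` and `Q` from the first vertex of `P` that lies on `Q`. -/
def tailSwap (PQ : List α × List α) : List α × List α :=
  match PQ.1.dropWhile (· ∉ PQ.2) with
  | [] => PQ
  | x :: l => (PQ.1.takeWhile (· ∉ PQ.2) ++ PQ.2.dropWhile (· ≠ x),
      PQ.2.takeWhile (· ≠ x) ++ x :: l)

theorem tailSwap_append_cons {l₁ l₂ m₁ m₂ : List α} {x : α}
    (hl₁ : ∀ y ∈ l₁, y ∉ m₁ ++ x :: m₂) (hm₁ : x ∉ m₁) :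
    tailSwap (l₁ ++ x :: l₂, m₁ ++ x :: m₂) = (l₁ ++ x :: m₂, m₁ ++ x :: l₂) := by
  have hx : x ∈ m₁ ++ x :: m₂ := by simp
  have hm₁' : ∀ y ∈ m₁, y ≠ x := fun y hy h => hm₁ (h ▸ hy)
  have hP : (l₁ ++ x :: l₂).dropWhile (· ∉ m₁ ++ x :: m₂) = x :: l₂ := by
    rw [List.dropWhile_append_of_pos (by simpa using hl₁),
      List.dropWhile_cons_of_neg (by simp)]
  unfold tailSwap
  rw [hP]
  simp only
  rw [List.takeWhile_append_of_pos (by simpa using hl₁), List.takeWhile_cons_of_neg (by simp),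
    List.dropWhile_append_of_pos (by simpa using hm₁'), List.dropWhile_cons_of_neg (by simp),
    List.takeWhile_append_of_pos (by simpa using hm₁'), List.takeWhile_cons_of_neg (by simp),
    List.append_nil, List.append_nil]

theorem exists_tailSwap_eq {P Q : List α} (h : ∃ z ∈ P, z ∈ Q) :
    ∃ l₁ x l₂ m₁ m₂, P = l₁ ++ x :: l₂ ∧ Q = m₁ ++ x :: m₂ ∧ (∀ y ∈ l₁, y ∉ Q) ∧
      x ∉ m₁ ∧ tailSwap (P, Q) = (l₁ ++ x :: m₂, m₁ ++ x :: l₂) := by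
  obtain ⟨l₁, x, l₂, rfl, hxQ, hl₁⟩ := List.exists_eq_append_cons_of_exists h
  obtain ⟨m₁, x', m₂, rfl, rfl, hm₁⟩ :=
    List.exists_eq_append_cons_of_exists (p := (· = x)) ⟨x, hxQ, rfl⟩
  have hm₁ : x' ∉ m₁ := fun h => hm₁ _ h rfl
  exact ⟨l₁, x', l₂, m₁, m₂, rfl, rfl, hl₁, hm₁, tailSwap_append_cons hl₁ hm₁⟩

theorem tailSwap_tailSwap {P Q : List α} (hP : P.Nodup) (h : ∃ z ∈ P, z ∈ Q) :
    tailSwap (tailSwap (P, Q)) = (P, Q) := by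
  obtain ⟨l₁, x, l₂, m₁, m₂, rfl, rfl, hl₁, hm₁, hswap⟩ := exists_tailSwap_eq h
  rw [hswap, tailSwap_append_cons _ hm₁]
  intro y hy
  have hy₂ : y ∉ l₂ := fun h =>
    (List.nodup_append.1 hP).2.2 y hy y (List.mem_cons_of_mem _ h) rfl
  simp only [List.mem_append, List.mem_cons, not_or] at hl₁ ⊢
  exact ⟨(hl₁ y hy).1, (hl₁ y hy).2.1, hy₂⟩

end TailSwap

section Crossing

variable {P Q : List (ℤ × ℤ)} {A B C D x : ℤ × ℤ}

theorem IsNEPathFromTo.splice {l₁ l₂ m₁ m₂ : List (ℤ × ℤ)}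
    (hP : IsNEPathFromTo (l₁ ++ x :: l₂) A B) (hQ : IsNEPathFromTo (m₁ ++ x :: m₂) C D) :
    IsNEPathFromTo (l₁ ++ x :: m₂) A D := by
  obtain ⟨⟨-, hPc⟩, hA, -⟩ := hP
  obtain ⟨⟨-, hQc⟩, -, hD⟩ := hQ
  refine ⟨isNEPath_iff.2 ⟨by simp, ?_⟩, by simpa [List.head?_append] using hA, ?_⟩
  · have h₁ := (show (l₁ ++ [x]) ++ l₂ = l₁ ++ x :: l₂ by simp) ▸ hPc
    have h₂ := List.IsChain.right_of_append (l₁ := m₁) (l₂ := [x] ++ m₂) hQc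
    simpa using h₁.left_of_append.append_overlap h₂ (by simp)
  · simpa [List.getLast?_append] using hD

/-- Discrete intermediate value argument: the two paths are compared on each antidiagonal
`x + y = const`, where the horizontal gap between them changes by at most one per step. -/
theorem exists_mem_mem_of_crossing (hP : IsNEPathFromTo P A B) (hQ : IsNEPathFromTo Q C D)
    (hC : C.1 + C.2 ≤ A.1 + A.2) (hBD : B.1 + B.2 = D.1 + D.2) (hA : A.1 ≤ C.1)
    (hD : D.1 ≤ B.1) : ∃ z ∈ P, z ∈ Q := by
  have step : ∀ {x y : ℤ × ℤ}, (y = (x.1, x.2 + 1) ∨ y = (x.1 + 1, x.2)) →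
      x.1 ≤ y.1 ∧ y.1 ≤ x.1 + 1 ∧ y.1 + y.2 = x.1 + x.2 + 1 := by
    rintro x y (rfl | rfl) <;> simp <;> ring
  induction Q generalizing P A C with
  | nil => exact absurd rfl hQ.1.1
  | cons c Q ih =>
    have hAB := hP.le
    cases Q with
    | nil =>
      obtain ⟨rfl, rfl⟩ := isNEPathFromTo_singleton.1 hQ
      have hAc : A = c := Prod.ext (by linarith [hAB.1, hAB.2]) (by linarith [hAB.1, hAB.2])
      exact ⟨A, (hP.eq_cons ▸ List.mem_cons_self : A ∈ P), by simp [hAc]⟩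
    | cons c' Q =>
      obtain ⟨rfl, hc', hQ'⟩ := isNEPathFromTo_cons_cons.1 hQ
      have hc' := step hc'
      rcases hC.lt_or_eq with hC | hC
      · obtain ⟨z, hzP, hzQ⟩ := ih hP hQ' (by omega) (by omega)
        exact ⟨z, hzP, List.mem_cons_of_mem _ hzQ⟩
      obtain ⟨l, rfl⟩ : ∃ l, P = A :: l := ⟨_, hP.eq_cons⟩
      by_cases hAc : A.1 = c.1
      · exact ⟨A, List.mem_cons_self, by rw [Prod.ext hAc (by omega : A.2 = c.2)]; simp⟩
      cases l with
      | nil =>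
        obtain ⟨-, rfl⟩ := isNEPathFromTo_singleton.1 hP
        have := hQ'.length_eq
        simp only [List.length_cons] at this
        omega
      | cons a l =>
        obtain ⟨-, ha, hP'⟩ := isNEPathFromTo_cons_cons.1 hP
        have ha := step ha
        obtain ⟨z, hzP, hzQ⟩ := ih hP' hQ' (by omega) (by omega)
        exact ⟨z, List.mem_cons_of_mem _ hzP, List.mem_cons_of_mem _ hzQ⟩

end Crossing

def meetingPairs (A B C D : ℤ × ℤ) : Set (List (ℤ × ℤ) × List (ℤ × ℤ)) :=
  nePaths A B ×ˢ nePaths C D ∩ {PQ | ∃ z ∈ PQ.1, z ∈ PQ.2}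

section Meeting

variable {A B C D : ℤ × ℤ}

theorem meetingPairs_subset : meetingPairs A B C D ⊆ nePaths A B ×ˢ nePaths C D :=
  Set.inter_subset_left

theorem tailSwap_mapsTo_meetingPairs :
    Set.MapsTo tailSwap (meetingPairs A B C D) (meetingPairs A D C B) := by
  rintro ⟨P, Q⟩ ⟨⟨hP, hQ⟩, hPQ⟩
  obtain ⟨l₁, x, l₂, m₁, m₂, rfl, rfl, -, -, hswap⟩ := exists_tailSwap_eq hPQ
  rw [hswap]
  exact ⟨⟨hP.splice hQ, hQ.splice hP⟩, x, by simp, by simp⟩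

theorem tailSwap_tailSwap_of_mem_meetingPairs {PQ : List (ℤ × ℤ) × List (ℤ × ℤ)}
    (h : PQ ∈ meetingPairs A B C D) : tailSwap (tailSwap PQ) = PQ :=
  tailSwap_tailSwap h.1.1.1.nodup h.2

theorem encard_meetingPairs_comm :
    (meetingPairs A B C D).encard = (meetingPairs A D C B).encard := by
  have hinv : Set.InvOn tailSwap tailSwap (meetingPairs A B C D) (meetingPairs A D C B) :=
    ⟨fun _ h => tailSwap_tailSwap_of_mem_meetingPairs h,
      fun _ h => tailSwap_tailSwap_of_mem_meetingPairs h⟩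
  have hbij := hinv.bijOn tailSwap_mapsTo_meetingPairs tailSwap_mapsTo_meetingPairs
  rw [← hbij.image_eq, hbij.injOn.encard_image]

end Meeting

theorem ncard_latticePathPairs_add (p q t u : ℕ) (hpq : p < q) (htu : t < u) :
    (latticePathPairs p q t u).ncard + p.choose u * q.choose t = p.choose t * q.choose u := by
  set A : ℤ × ℤ := (0, -p)
  set B : ℤ × ℤ := (t, -t)
  set C : ℤ × ℤ := (0, -q)
  set D : ℤ × ℤ := (u, -u)
  have hL : latticePathPairs p q t u = nePaths A B ×ˢ nePaths C D \ meetingPairs A B C D := by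
    ext PQ
    simp [latticePathPairs, meetingPairs, nePaths, A, B, C, D, and_assoc]
  have hcross : meetingPairs A D C B = nePaths A D ×ˢ nePaths C B :=
    Set.inter_eq_left.2 fun PQ h => exists_mem_mem_of_crossing h.1 h.2
      (by simp [A, C]; omega) (by simp [B, D]) (by simp [A, C]) (by simp [B, D]; omega)
  have h := Set.encard_sdiff_add_encard_of_subset (meetingPairs_subset : meetingPairs A B C D ⊆ _)
  rw [← hL, encard_meetingPairs_comm, hcross,
    Set.encard_prod, Set.encard_prod, encard_nePaths_antidiagonal, encard_nePaths_antidiagonal,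
    encard_nePaths_antidiagonal, encard_nePaths_antidiagonal] at h
  have hfin : (latticePathPairs p q t u).Finite := by
    refine Set.finite_of_encard_le_coe (k := p.choose t * q.choose u) ?_
    push_cast
    exact h ▸ le_self_add
  rw [← hfin.cast_ncard_eq] at h
  exact_mod_cast h

def chooseMinor (t u x y : ℕ) : ℤ := x.choose t * y.choose u - x.choose u * y.choose t

section ChooseMinor

variable {t u x y : ℕ}

theorem ncard_latticePathPairs {p q : ℕ} (hpq : p < q) (htu : t < u) :
    ((latticePathPairs p q t u).ncard : ℤ) = chooseMinor t u p q := by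
  have h := congrArg (Nat.cast : ℕ → ℤ) (ncard_latticePathPairs_add p q t u hpq htu)
  push_cast at h
  rw [chooseMinor]
  linarith

theorem chooseMinor_self (x y : ℕ) : chooseMinor t t x y = 0 := by
  simp [chooseMinor]

theorem chooseMinor_nonneg (hxy : x ≤ y) (htu : t ≤ u) : 0 ≤ chooseMinor t u x y := by
  rcases hxy.lt_or_eq with hxy | rfl
  · rcases htu.lt_or_eq with htu | rfl
    · rw [← ncard_latticePathPairs hxy htu]
      positivity
    · rw [chooseMinor_self]
  · simp [chooseMinor, mul_comm]

theorem chooseMinor_le_succ_succ (hxy : x ≤ y) (htu : t ≤ u) :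
    chooseMinor t u x y ≤ chooseMinor t u (x + 1) (y + 1) := by
  rcases htu.lt_or_eq with htu | rfl
  · obtain ⟨u, rfl⟩ : ∃ u', u = u' + 1 := ⟨u - 1, by omega⟩
    rcases t with _ | t
    · have := Nat.choose_le_choose u hxy
      simp only [chooseMinor, Nat.choose_zero_right, Nat.choose_succ_succ']
      push_cast
      linarith
    · have h₁ := chooseMinor_nonneg hxy (t := t + 1) (u := u) (by omega)
      have h₂ := chooseMinor_nonneg hxy (t := t) (u := u + 1) (by omega)
      have h₃ := chooseMinor_nonneg hxy (t := t) (u := u) (by omega)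
      simp only [chooseMinor, Nat.choose_succ_succ'] at *
      push_cast
      linarith
  · simp [chooseMinor_self]

theorem chooseMinor_le_add_add (hxy : x ≤ y) (htu : t ≤ u) (j : ℕ) :
    chooseMinor t u x y ≤ chooseMinor t u (x + j) (y + j) := by
  induction j with
  | zero => rfl
  | succ j ih => exact ih.trans (chooseMinor_le_succ_succ (by omega) htu)

end ChooseMinor

open Finset in
theorem chooseMinor_add_chooseMinor_le {a b T U : ℕ} (hab : a + 1 ≤ b) (hT : 0 < T)
    (hTU : T ≤ U) :
    chooseMinor T U a (a + 1) + chooseMinor T U (a + 1) (b + 1) ≤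
      chooseMinor T U a b + chooseMinor T U b (b + 1) := by
  obtain ⟨t, rfl⟩ : ∃ t, T = t + 1 := ⟨T - 1, by omega⟩
  obtain ⟨u, rfl⟩ : ∃ u, U = u + 1 := ⟨U - 1, by omega⟩
  have hsum : ∀ k, ∑ m ∈ Ico (a + 1) b, (m.choose k : ℤ) =
      b.choose (k + 1) - (a + 1).choose (k + 1) := by
    intro k
    rw [← Finset.sum_Ico_sub (fun m => (m.choose (k + 1) : ℤ)) hab]
    refine Finset.sum_congr rfl fun m _ => ?_
    rw [Nat.choose_succ_succ']
    push_cast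
    ring
  have key : chooseMinor (t + 1) (u + 1) a b + chooseMinor (t + 1) (u + 1) b (b + 1) -
      (chooseMinor (t + 1) (u + 1) a (a + 1) + chooseMinor (t + 1) (u + 1) (a + 1) (b + 1)) =
      ∑ m ∈ Ico (a + 1) b, (chooseMinor t u m b - chooseMinor t u a m) := by
    have e : ∑ m ∈ Ico (a + 1) b, (chooseMinor t u m b - chooseMinor t u a m) =
        (∑ m ∈ Ico (a + 1) b, (m.choose t : ℤ)) * (a.choose u + b.choose u) -
          (∑ m ∈ Ico (a + 1) b, (m.choose u : ℤ)) * (a.choose t + b.choose t) := by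
      rw [Finset.sum_mul, Finset.sum_mul, ← Finset.sum_sub_distrib]
      refine Finset.sum_congr rfl fun m _ => ?_
      rw [chooseMinor, chooseMinor]
      ring
    rw [e, hsum, hsum]
    simp only [chooseMinor, Nat.choose_succ_succ' a, Nat.choose_succ_succ' b]
    push_cast
    ring
  have hreflect : ∑ m ∈ Ico (a + 1) b, chooseMinor t u a m =
      ∑ m ∈ Ico (a + 1) b, chooseMinor t u a (a + b - m) := by
    rw [Finset.sum_Ico_reflect _ _ (by omega), show a + b + 1 - b = a + 1 by omega,
      show a + b + 1 - (a + 1) = b by omega]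
  rw [← sub_nonneg, key, Finset.sum_sub_distrib, hreflect, sub_nonneg]
  refine Finset.sum_le_sum fun m hm => ?_
  have hm := Finset.mem_Ico.1 hm
  have := chooseMinor_le_add_add (t := t) (u := u) (x := a) (y := a + b - m) (by omega)
    (by omega) (m - a)
  rwa [show a + (m - a) = m by omega, show a + b - m + (m - a) = b by omega] at this

theorem lattice_path_count_le_general (d : ℕ) (a r s : ℕ)
    (ha : a < d / 2) (hrs : r < s) (hs : s ≤ d - 1) :
    (latticePathPairs (a : ℤ) ((a : ℤ) + 1) ((d : ℤ) - s) ((d : ℤ) - r)).ncard +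
      (latticePathPairs ((a : ℤ) + 1) ((d : ℤ) + 1 - a) ((d : ℤ) - s) ((d : ℤ) - r)).ncard ≤
    (latticePathPairs (a : ℤ) ((d : ℤ) + 1 - a - 1) ((d : ℤ) - s) ((d : ℤ) - r)).ncard +
      (latticePathPairs ((d : ℤ) + 1 - a - 1) ((d : ℤ) + 1 - a) ((d : ℤ) - s) ((d : ℤ) - r)).ncard := by
  have htu : d - s < d - r := by omega
  have key := chooseMinor_add_chooseMinor_le (a := a) (b := d - a) (by omega) (by omega) htu.le
  rw [← ncard_latticePathPairs (by omega) htu, ← ncard_latticePathPairs (by omega) htu,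
    ← ncard_latticePathPairs (by omega) htu, ← ncard_latticePathPairs (by omega) htu] at key
  rw [show (d : ℤ) + 1 - a - 1 = (d - a : ℕ) by omega,
    show (d : ℤ) + 1 - a = (d - a + 1 : ℕ) by omega, show (d : ℤ) - s = (d - s : ℕ) by omega,
    show (d : ℤ) - r = (d - r : ℕ) by omega]
  exact_mod_cast key

/-- With `ã = d+1-a`, `r̄ = d-r`, `s̄ = d-s`, one has
`#L(a, a+1; s̄, r̄) + #L(a+1, ã; s̄, r̄) ≤ #L(a, ã−1; s̄, r̄) + #L(ã−1, ã; s̄, r̄)`. -/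
theorem lattice_path_count_le (d : ℕ) (hd : 3 ≤ d) (a r s : ℕ)
    (ha : a < d / 2) (hrs : r < s) (hs : s ≤ d - 1) :
    (latticePathPairs (a : ℤ) ((a : ℤ) + 1) ((d : ℤ) - s) ((d : ℤ) - r)).ncard +
      (latticePathPairs ((a : ℤ) + 1) ((d : ℤ) + 1 - a) ((d : ℤ) - s) ((d : ℤ) - r)).ncard ≤
    (latticePathPairs (a : ℤ) ((d : ℤ) + 1 - a - 1) ((d : ℤ) - s) ((d : ℤ) - r)).ncard +
      (latticePathPairs ((d : ℤ) + 1 - a - 1) ((d : ℤ) + 1 - a) ((d : ℤ) - s) ((d : ℤ) - r)).ncard :=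
  lattice_path_count_le_general d a r s ha hrs hs
end

section
/- Let d ≥ 3 and δ = ⌊d/2⌋, and let n ≥ d+2 be an integer. Let (g_0, g_1, …, g_δ) be an m-sequence of integers, and set c_i = C(n−d−2+i, i) for 0 ≤ i ≤ δ. Then there exists an integer t with 0 ≤ t ≤ δ such that g_i ≥ c_i for all 0 ≤ i ≤ t and g_i ≤ c_i for all t < i ≤ δ. -/
/-- If `(g_0, …, g_{⌊d/2⌋})` is an m-sequence and `c_i = C(n-d-2+i, i)` is the g-vector of
the cyclic polytope `C(n,d)`, then there is a crossing index `t` such that `g_i ≥ c_i`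
for `i ≤ t` and `g_i ≤ c_i` for `t < i ≤ ⌊d/2⌋`. -/
theorem mSeq_crossing (d n : ℕ) (hd : 3 ≤ d) (hn : d + 2 ≤ n) (g : ℕ → ℤ)
    (hg0 : g 0 = 1)
    (hm : ∀ m j : ℕ, 1 < j → j ≤ d / 2 → j ≤ m →
      (m.choose j : ℤ) ≤ g j → ((m - 1).choose (j - 1) : ℤ) ≤ g (j - 1)) :
    ∃ t ≤ d / 2,
      (∀ i ≤ t, ((n - d - 2 + i).choose i : ℤ) ≤ g i) ∧
      (∀ i, t < i → i ≤ d / 2 → g i ≤ ((n - d - 2 + i).choose i : ℤ)) := by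
  classical
  set c : ℕ → ℤ := fun i => ((n - d - 2 + i).choose i : ℤ) with hc
  have hc0 : c 0 = 1 := by simp [hc]
  -- descent step
  have descend : ∀ i, 1 ≤ i → i ≤ d / 2 → c i ≤ g i → c (i - 1) ≤ g (i - 1) := by
    intro i hi1 hiδ hci
    rcases eq_or_lt_of_le hi1 with h1 | h1
    · simpa [← h1, hc0, hg0]
    · have h := hm (n - d - 2 + i) i h1 hiδ (Nat.le_add_left _ _) hci
      have heq : n - d - 2 + i - 1 = n - d - 2 + (i - 1) := by omega
      simpa [hc, heq] using h
  -- downward closure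
  have down : ∀ i, i ≤ d / 2 → c i ≤ g i → ∀ j ≤ i, c j ≤ g j := by
    intro i
    induction i with
    | zero => intro _ hci j hj; simpa [Nat.le_zero.mp hj] using hci
    | succ k ih =>
      intro hkδ hci j hj
      rcases Nat.le_succ_iff.mp hj with h | h
      · have hk : c k ≤ g k := by
          have := descend (k + 1) (Nat.succ_le_succ (Nat.zero_le _)) hkδ hci
          simpa using this
        exact ih (le_trans (Nat.le_succ _) hkδ) hk j h
      · simpa [h] using hci
  let t := Nat.findGreatest (fun s => c s ≤ g s) (d / 2)
  refine ⟨t, Nat.findGreatest_le _, ?_, ?_⟩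
  · intro i hi
    have hspec : c t ≤ g t := Nat.findGreatest_spec (P := fun s => c s ≤ g s)
      (Nat.zero_le _) (by simp [hc0, hg0])
    exact down t (Nat.findGreatest_le _) hspec i hi
  · intro i hti hiδ
    have := Nat.findGreatest_is_greatest (P := fun s => c s ≤ g s) hti hiδ
    exact le_of_not_ge this
end

section
/- Let d ≥ 3, δ = ⌊d/2⌋, and let n > d be an integer. Let g_0, …, g_δ be integers with g_0 = 1 and g_i ≥ 0 for all 1 ≤ i ≤ δ, and define f_j = Σ_{i=0}^{δ} g_i·m_{i,j} for 0 ≤ j ≤ d−1. Let gS_0 = 1, gS_1 = n−d−1, and gS_i = 0 for 2 ≤ i ≤ δ, and define fS_j = Σ_{i=0}^{δ} gS_i·m_{i,j}. If fS_r ≤ f_r for some integer r with 0 ≤ r ≤ d−2, then fS_s ≤ f_s for every integer s with r < s ≤ d−1. -/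
/-- The g-vector `(1, n-d-1, 0, …, 0)` of the stacked polytope `S(n,d)`. -/
def gStacked (n d i : ℕ) : ℤ :=
  if i = 0 then 1 else if i = 1 then (n : ℤ) - d - 1 else 0

theorem sub_one_mul_choose_le_sub_one_mul_choose {i b k : ℕ} (hk : 2 ≤ k) (hib : i ≤ b) :
    (b - 1) * i.choose k ≤ (i - 1) * b.choose k := by
  obtain ⟨c, rfl⟩ : ∃ c, k = c + 2 := ⟨k - 2, by omega⟩
  rcases lt_or_ge i 2 with hi | hi
  · simp [Nat.choose_eq_zero_of_lt (show i < c + 2 by omega)]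
  obtain ⟨m, rfl⟩ : ∃ m, i = m + 2 := ⟨i - 2, by omega⟩
  obtain ⟨p, rfl⟩ : ∃ p, b = p + 2 := ⟨b - 2, by omega⟩
  have choose_two_steps : ∀ n, (n + 2).choose (c + 2) * ((c + 2) * (c + 1))
      = (n + 2) * (n + 1) * n.choose c := fun n => by
    rw [mul_assoc (n + 2), Nat.add_one_mul_choose_eq, ← mul_assoc, ← Nat.add_one_mul_choose_eq]
    ring
  show (p + 1) * (m + 2).choose (c + 2) ≤ (m + 1) * (p + 2).choose (c + 2)
  refine Nat.le_of_mul_le_mul_right ?_ (show 0 < (c + 2) * (c + 1) by positivity)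
  calc (p + 1) * (m + 2).choose (c + 2) * ((c + 2) * (c + 1))
      = (p + 1) * (m + 1) * ((m + 2) * m.choose c) := by
        rw [mul_assoc, choose_two_steps]; ring
    _ ≤ (p + 1) * (m + 1) * ((p + 2) * p.choose c) := by
        gcongr
        omega
    _ = (m + 1) * (p + 2).choose (c + 2) * ((c + 2) * (c + 1)) := by
        rw [mul_assoc (m + 1), choose_two_steps]; ring

theorem cast_choose_succ_right_eq (n k : ℕ) :
    (n.choose (k + 1) : ℤ) * (k + 1) = n.choose k * ((n : ℤ) - k) := by
  rcases le_or_gt k n with hkn | hnk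
  · rw [← Nat.cast_sub hkn]; exact_mod_cast Nat.choose_succ_right_eq n k
  · simp [Nat.choose_eq_zero_of_lt hnk, Nat.choose_eq_zero_of_lt (hnk.trans (Nat.lt_succ_self k))]

theorem mMat_one_succ_mul_le {d i j : ℕ} (hi : 1 ≤ i) (hid : 2 * i ≤ d + 1) (hj : j + 1 < d) :
    mMat d 1 (j + 1) * mMat d i j ≤ mMat d 1 j * mMat d i (j + 1) := by
  obtain ⟨k, hk⟩ : ∃ k, d - (j + 1) = k := ⟨_, rfl⟩
  have hk_succ : d - j = k + 1 := by omega
  set b := d + 1 - i with hb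
  have hbZ : (b : ℤ) = d + 1 - i := by omega
  have bracket_nonneg : 0 ≤ (d.choose k : ℤ) * ((d - b) * b.choose k - (d - i) * i.choose k)
      + (1 : ℕ).choose k * ((b - 1) * b.choose k - (i - 1) * i.choose k) := by
    rcases Nat.lt_or_ge k 2 with hk2 | hk2
    · obtain rfl : k = 1 := by omega
      simp only [Nat.choose_one_right, Nat.cast_one, hbZ]
      exact le_of_eq (by ring)
    · have key := sub_one_mul_choose_le_sub_one_mul_choose hk2 (show i ≤ b by omega)
      zify [show 1 ≤ b by omega, hi] at key
      rw [Nat.choose_eq_zero_of_lt (by omega : 1 < k), Nat.cast_zero, zero_mul, add_zero,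
        show (d : ℤ) - b = i - 1 by omega, show (d : ℤ) - i = b - 1 by omega]
      exact mul_nonneg (Nat.cast_nonneg _) (sub_nonneg.2 key)
  have identity :
      ((k : ℤ) + 1) * (mMat d 1 j * mMat d i (j + 1) - mMat d 1 (j + 1) * mMat d i j)
      = (d.choose k : ℤ) * ((d - b) * b.choose k - (d - i) * i.choose k)
        + (1 : ℕ).choose k * ((b - 1) * b.choose k - (i - 1) * i.choose k) := by
    simp only [mMat, hk, hk_succ, Nat.add_sub_cancel, ← hb]
    have ed := cast_choose_succ_right_eq d k
    have e1 := cast_choose_succ_right_eq 1 k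
    have eb := cast_choose_succ_right_eq b k
    have ei := cast_choose_succ_right_eq i k
    push_cast at e1 ⊢
    linear_combination ((b.choose k : ℤ) - i.choose k) * (ed - e1)
      - ((d.choose k : ℤ) - (1 : ℕ).choose k) * (eb - ei)
  rw [← sub_nonneg]
  exact nonneg_of_mul_nonneg_right (identity ▸ bracket_nonneg) (by positivity)

theorem mMat_nonneg {d i : ℕ} (j : ℕ) (hid : 2 * i ≤ d + 1) : 0 ≤ mMat d i j :=
  sub_nonneg.2 (by exact_mod_cast Nat.choose_le_choose _ (by omega))

theorem mMat_one_pos {d j : ℕ} (hj : j + 2 ≤ d) : 0 < mMat d 1 j := by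
  rw [mMat, Nat.add_sub_cancel, Nat.choose_eq_zero_of_lt (by omega : 1 < d - j), Nat.cast_zero,
    sub_zero]
  exact_mod_cast Nat.choose_pos (by omega)

def fVector (d : ℕ) (g : ℕ → ℤ) (j : ℕ) : ℤ :=
  ∑ i ∈ Finset.range (d / 2 + 1), g i * mMat d i j

theorem fVector_sub (d : ℕ) (g g' : ℕ → ℤ) (j : ℕ) :
    fVector d (g - g') j = fVector d g j - fVector d g' j := by
  simp only [fVector, Pi.sub_apply, sub_mul, Finset.sum_sub_distrib]

section Propagation

variable {d : ℕ} {c : ℕ → ℤ}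

theorem mMat_one_succ_mul_fVector_le (hc0 : c 0 = 0) (hc : ∀ i, 2 ≤ i → i ≤ d / 2 → 0 ≤ c i)
    {j : ℕ} (hj : j + 1 < d) :
    mMat d 1 (j + 1) * fVector d c j ≤ mMat d 1 j * fVector d c (j + 1) := by
  simp only [fVector, Finset.mul_sum]
  refine Finset.sum_le_sum fun i hi => ?_
  have hid : i ≤ d / 2 := Nat.lt_succ_iff.1 (Finset.mem_range.1 hi)
  rcases Nat.lt_or_ge i 2 with hi2 | hi2
  · interval_cases i
    · simp [hc0]
    · exact le_of_eq (by ring)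
  · calc mMat d 1 (j + 1) * (c i * mMat d i j)
        = c i * (mMat d 1 (j + 1) * mMat d i j) := by ring
      _ ≤ c i * (mMat d 1 j * mMat d i (j + 1)) :=
          mul_le_mul_of_nonneg_left (mMat_one_succ_mul_le (by omega) (by omega) hj)
            (hc i hi2 hid)
      _ = mMat d 1 j * (c i * mMat d i (j + 1)) := by ring

theorem fVector_succ_nonneg (hc0 : c 0 = 0) (hc : ∀ i, 2 ≤ i → i ≤ d / 2 → 0 ≤ c i)
    {j : ℕ} (hj : j + 1 < d) (hF : 0 ≤ fVector d c j) :
    0 ≤ fVector d c (j + 1) :=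
  nonneg_of_mul_nonneg_right
    ((mul_nonneg (mMat_nonneg _ (by omega)) hF).trans (mMat_one_succ_mul_fVector_le hc0 hc hj))
    (mMat_one_pos (by omega))

theorem fVector_nonneg_of_le (hc0 : c 0 = 0) (hc : ∀ i, 2 ≤ i → i ≤ d / 2 → 0 ≤ c i)
    {r : ℕ} (hr : 0 ≤ fVector d c r) :
    ∀ s, r ≤ s → s < d → 0 ≤ fVector d c s := by
  intro s hs
  induction s, hs using Nat.le_induction with
  | base => exact fun _ => hr
  | succ s _ ih => exact fun hsd => fVector_succ_nonneg hc0 hc hsd (ih (by omega))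

end Propagation

theorem lower_bounds_general (d n : ℕ) (g : ℕ → ℤ)
    (hg0 : g 0 = 1)
    (hgnn : ∀ i, 1 ≤ i → i ≤ d / 2 → 0 ≤ g i)
    (r : ℕ)
    (hfr : ∑ i ∈ Finset.range (d / 2 + 1), gStacked n d i * mMat d i r ≤
           ∑ i ∈ Finset.range (d / 2 + 1), g i * mMat d i r) :
    ∀ s, r < s → s ≤ d - 1 →
      ∑ i ∈ Finset.range (d / 2 + 1), gStacked n d i * mMat d i s ≤
        ∑ i ∈ Finset.range (d / 2 + 1), g i * mMat d i s := by
  intro s hrs hs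
  have hc0 : (g - gStacked n d) 0 = 0 := by simp [gStacked, hg0]
  have hc : ∀ i, 2 ≤ i → i ≤ d / 2 → 0 ≤ (g - gStacked n d) i := fun i hi2 hid => by
    simpa [gStacked, show i ≠ 0 by omega, show i ≠ 1 by omega] using hgnn i (by omega) hid
  have hr : 0 ≤ fVector d (g - gStacked n d) r := by
    rw [fVector_sub]; exact sub_nonneg.2 hfr
  have hs_nonneg := fVector_nonneg_of_le hc0 hc hr s hrs.le (by omega)
  rw [fVector_sub] at hs_nonneg
  exact sub_nonneg.1 hs_nonneg

/-- Lower bounds: if `g` is nonnegative with `g_0 = 1`, `f = g·M_d`, and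
`fS = gStacked·M_d` is the f-vector of the stacked polytope `S(n,d)`,
then `fS_r ≤ f_r` for some `r ≤ d-2` implies `fS_s ≤ f_s` for all `r < s ≤ d-1`. -/
theorem lower_bounds (d n : ℕ) (hd : 3 ≤ d) (hn : d < n) (g : ℕ → ℤ)
    (hg0 : g 0 = 1)
    (hgnn : ∀ i, 1 ≤ i → i ≤ d / 2 → 0 ≤ g i)
    (r : ℕ) (hr : r ≤ d - 2)
    (hfr : ∑ i ∈ Finset.range (d / 2 + 1), gStacked n d i * mMat d i r ≤
           ∑ i ∈ Finset.range (d / 2 + 1), g i * mMat d i r) :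
    ∀ s, r < s → s ≤ d - 1 →
      ∑ i ∈ Finset.range (d / 2 + 1), gStacked n d i * mMat d i s ≤
        ∑ i ∈ Finset.range (d / 2 + 1), g i * mMat d i s :=
  lower_bounds_general d n g hg0 hgnn r hfr
end

section
/- Every M-sequence (n_0, n_1, …, n_δ) is an m-sequence; that is, if n_0 = 1, all n_i are nonnegative integers, and ∂^k(n_k) ≤ n_{k−1} for all k with 1 < k ≤ δ, then for all integers m, j with δ ≥ j > 1 and m ≥ j, the inequality n_j ≥ C(m, j) implies n_{j−1} ≥ C(m−1, j−1). -/
/-- `partialShadow k n = ∂^k(n)`: writing `n = C(a_k,k) + C(a_{k-1},k-1) + … + C(a_i,i)`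
with `a_k > a_{k-1} > … > a_i ≥ i ≥ 1` (the unique such expansion, computed greedily),
`∂^k(n) = C(a_k-1,k-1) + C(a_{k-1}-1,k-2) + … + C(a_i-1,i-1)`; also `∂^k(0) = 0`. -/
def partialShadow : ℕ → ℕ → ℕ
  | 0, _ => 0
  | _ + 1, 0 => 0
  | k + 1, n + 1 =>
    let a := Nat.findGreatest (fun x => x.choose (k + 1) ≤ n + 1) (n + k + 2)
    (a - 1).choose k + partialShadow k (n + 1 - a.choose (k + 1))

lemma choose_lower (j : ℕ) : ∀ m : ℕ, 1 ≤ j → j ≤ m → m + 1 - j ≤ m.choose j := by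
  induction j with
  | zero => intro m h; omega
  | succ k ih =>
    intro m _ hm
    rcases Nat.exists_eq_add_of_le hm with ⟨c, rfl⟩
    rcases Nat.eq_zero_or_pos k with hk | hk
    · subst hk; simp
    · have h1 : (k + c).choose k ≤ (k + 1 + c).choose (k + 1) := by
        calc (k + c).choose k ≤ (k + c).choose k + (k+c).choose (k+1) := Nat.le_add_right _ _
          _ = (k + 1 + c).choose (k + 1) := by
            rw [show k + 1 + c = (k + c) + 1 by ring, Nat.choose_succ_succ']
      have h2 := ih (k + c) hk (by omega)
      omega

lemma partialShadow_key (k m n : ℕ) (hm : k + 1 ≤ m) (h : m.choose (k + 1) ≤ n + 1) :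
    (m - 1).choose k ≤ partialShadow (k + 1) (n + 1) := by
  have hlow : m - k ≤ n + 1 := by
    have := choose_lower (k + 1) m (by omega) hm
    omega
  have hbound : m ≤ n + k + 2 := by omega
  have ha : m ≤ Nat.findGreatest (fun x => x.choose (k + 1) ≤ n + 1) (n + k + 2) :=
    Nat.le_findGreatest hbound h
  show (Nat.findGreatest (fun x => x.choose (k + 1) ≤ n + 1) (n + k + 2) - 1).choose k + _ ≥ _
  have := Nat.choose_le_choose k (Nat.sub_le_sub_right ha 1)
  omega

/-- Every M-sequence is an m-sequence: if `n_0 = 1` and `∂^k(n_k) ≤ n_{k-1}` for all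
`1 < k ≤ δ`, then for all `m ≥ j` with `δ ≥ j > 1`, `n_j ≥ C(m,j)` implies
`n_{j-1} ≥ C(m-1,j-1)`. -/
theorem MSequence_is_mSequence (δ : ℕ) (g : ℕ → ℕ)
    (hg0 : g 0 = 1)
    (hM : ∀ k, 1 < k → k ≤ δ → partialShadow k (g k) ≤ g (k - 1)) :
    ∀ m j : ℕ, 1 < j → j ≤ δ → j ≤ m →
      m.choose j ≤ g j → (m - 1).choose (j - 1) ≤ g (j - 1) := by
  intro m j hj hjδ hjm hc
  obtain ⟨k, rfl⟩ : ∃ k, j = k + 1 := ⟨j - 1, by omega⟩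
  have hpos : 1 ≤ m.choose (k + 1) := Nat.choose_pos hjm
  obtain ⟨n, hn⟩ : ∃ n, g (k + 1) = n + 1 := ⟨g (k+1) - 1, by omega⟩
  have := partialShadow_key k m n hjm (by omega)
  have := hM (k + 1) hj hjδ
  rw [hn] at this
  simp only [Nat.add_sub_cancel] at *
  omega
end
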